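/- Let n ≥ 1 be an integer. For every j with 0 ≤ j ≤ n − 1, the complex number τⱼ = 2i·cos((2j+1)π/(2n)) is a root of the classical Lucas polynomial Lₙ, i.e. Lₙ(2i·cos((2j+1)π/(2n))) = 0, where i = √(−1). -/

import Mathlib

/-- The classical Lucas polynomials viewed as functions `ℂ → ℂ`:
`L₀ = 2`, `L₁(x) = x`, `Lₙ(x) = x·Lₙ₋₁(x) + Lₙ₋₂(x)`. -/
noncomputable def lucasPoly : ℕ → ℂ → ℂ
  | 0 => fun _ => 2
  | 1 => fun x => x
  | n + 2 => fun x => x * lucasPoly (n + 1) x + lucasPoly n x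

lemma lucasPoly_binet : ∀ (n : ℕ) (z w : ℂ), z * w = -1 →
    lucasPoly n (z + w) = z ^ n + w ^ n
  | 0, z, w, _ => by norm_num [lucasPoly]
  | 1, z, w, _ => by simp [lucasPoly]
  | n + 2, z, w, h => by
    simp only [lucasPoly]
    rw [lucasPoly_binet n z w h, lucasPoly_binet (n + 1) z w h]
    linear_combination (z ^ n + w ^ n) * h

theorem lucasPoly_roots (n : ℕ) (hn : 1 ≤ n) (j : ℕ) (hj : j ≤ n - 1) :
    lucasPoly n
      (2 * Complex.I *
        Complex.cos ((2 * (j : ℂ) + 1) * (Real.pi : ℂ) / (2 * (n : ℂ)))) = 0 := by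
  set θ : ℂ := (2 * (j : ℂ) + 1) * (Real.pi : ℂ) / (2 * (n : ℂ)) with hθ
  have hn0 : (n : ℂ) ≠ 0 := Nat.cast_ne_zero.mpr (by omega)
  have hzw : (Complex.I * Complex.exp (θ * Complex.I)) *
      (Complex.I * Complex.exp (-θ * Complex.I)) = -1 := by
    rw [mul_mul_mul_comm, ← Complex.exp_add, Complex.I_mul_I]
    ring_nf
    simp
  have hx : 2 * Complex.I * Complex.cos θ =
      Complex.I * Complex.exp (θ * Complex.I) + Complex.I * Complex.exp (-θ * Complex.I) := by
    rw [Complex.cos]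
    ring
  rw [hx, lucasPoly_binet n _ _ hzw, mul_pow, mul_pow, ← Complex.exp_nat_mul,
    ← Complex.exp_nat_mul]
  have hnθ : (n : ℂ) * θ = (2 * (j : ℤ) + 1) * (Real.pi : ℂ) / 2 := by
    rw [hθ]
    field_simp
    push_cast
    ring
  have hcos : Complex.cos ((n : ℂ) * θ) = 0 := by
    rw [Complex.cos_eq_zero_iff]
    exact ⟨(j : ℤ), by rw [hnθ]⟩
  have := hcos
  rw [Complex.cos, div_eq_zero_iff] at this
  have h2 : Complex.exp (-((n:ℂ) * θ) * Complex.I) + Complex.exp ((n:ℂ) * θ * Complex.I) = 0 := by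
    simpa [add_comm] using this.resolve_right (by norm_num)
  calc Complex.I ^ n * Complex.exp ((n:ℂ) * (θ * Complex.I)) +
        Complex.I ^ n * Complex.exp ((n:ℂ) * (-θ * Complex.I))
      = Complex.I ^ n * (Complex.exp (-((n:ℂ) * θ) * Complex.I) +
        Complex.exp ((n:ℂ) * θ * Complex.I)) := by ring_nf
    _ = 0 := by rw [h2, mul_zero]
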